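/- There exists a constant λ₀ > 0 such that for every v ∈ H¹(ℝ) satisfying ∫_ℝ v(s) U'(s) ds = 0, one has ⟨Lv, v⟩_{L²(ℝ)} = ∫_ℝ [-(v')² - (3U²-1) v²] ds ≤ -λ₀ ‖v‖²_{L²(ℝ)}. -/

import Mathlib

open MeasureTheory

noncomputable def U : ℝ → ℝ := fun x => Real.tanh (x / Real.sqrt 2)

open Set Filter Real

/-!
Write `φ = 1 - U² = √2 U'` for the positive ground state of `L`. Since `φ' = -√2 U φ`, the
quadratic form factors as `⟨L v, v⟩ = -‖v' + √2 U v‖² = -‖φ (v / φ)'‖²`: the cross term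
`2√2 U v v' + (1 - U²) v²` is `√2 (U v²)'`, which integrates to zero.

For `v ⊥ φ` put `u = v / φ - c`, with `c` chosen so that `u 0 = 0`. Pythagoras gives
`‖v‖² ≤ ‖v - c φ‖² = ‖φ u‖²`. The ground state is pinched between exponentials,
`e^{-2√2|x|} ≤ φ² ≤ 16 e^{-2√2|x|}`, and on each half-line completing the square in
`(u² e^{-a x})'` yields the weighted Hardy inequality
`(a²/4) ∫ u² e^{-a|x|} ≤ ∫ u'² e^{-a|x|}` for `u 0 = 0`.
With `a = 2√2` this gives `‖φ u‖² ≤ 8 ‖φ u'‖²`, hence `λ₀ = 1/8`.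
-/

theorem integral_sq_le_integral_sub_mul_sq {α : Type*} [MeasurableSpace α] {μ : Measure α}
    {f g : α → ℝ} (c : ℝ) (hf : MemLp f 2 μ) (hg : MemLp g 2 μ)
    (horth : ∫ x, f x * g x ∂μ = 0) :
    ∫ x, f x ^ 2 ∂μ ≤ ∫ x, (f x - c * g x) ^ 2 ∂μ := by
  have hexpand : ∀ x,
      (f x - c * g x) ^ 2 = f x ^ 2 - 2 * c * (f x * g x) + c ^ 2 * g x ^ 2 :=
    fun x => by ring
  have hfg : Integrable (fun x => f x * g x) μ := hf.integrable_mul hg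
  have hfsub : Integrable (fun x => f x ^ 2 - 2 * c * (f x * g x)) μ :=
    hf.integrable_sq.sub (hfg.const_mul _)
  simp_rw [hexpand]
  rw [integral_add hfsub (hg.integrable_sq.const_mul _),
    integral_sub hf.integrable_sq (hfg.const_mul _), integral_const_mul, integral_const_mul, horth]
  have hg2 : 0 ≤ ∫ x, g x ^ 2 ∂μ := integral_nonneg fun x => sq_nonneg (g x)
  nlinarith [sq_nonneg c]

theorem integrable_exp_neg_mul_abs {a : ℝ} (ha : 0 < a) :
    Integrable fun x : ℝ => exp (-a * |x|) := by
  have hIoi : IntegrableOn (fun x : ℝ => exp (-a * |x|)) (Ioi 0) :=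
    (exp_neg_integrableOn_Ioi 0 ha).congr_fun
      (fun x hx => by simp only [abs_of_pos (mem_Ioi.mp hx)]) measurableSet_Ioi
  have hIic : IntegrableOn (fun x : ℝ => exp (-a * |x|)) (Iic 0) := by
    have hneg : MeasurableEmbedding fun x : ℝ => -x := (Homeomorph.neg ℝ).measurableEmbedding
    rw [← Measure.map_neg_eq_self (volume : Measure ℝ), hneg.integrableOn_map_iff]
    simpa [Function.comp_def] using (integrableOn_Ici_iff_integrableOn_Ioi).mpr hIoi
  rw [← integrableOn_univ, ← Iic_union_Ioi (a := (0:ℝ))]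
  exact hIic.union hIoi

theorem weighted_hardy_Ioi {u : ℝ → ℝ} (a : ℝ) (hu : Differentiable ℝ u) (hu0 : u 0 = 0)
    (hint : IntegrableOn (fun x => exp (-a * |x|) * u x ^ 2) (Ioi 0))
    (hint' : IntegrableOn (fun x => exp (-a * |x|) * deriv u x ^ 2) (Ioi 0)) :
    a ^ 2 / 4 * ∫ x in Ioi 0, exp (-a * |x|) * u x ^ 2 ≤
      ∫ x in Ioi 0, exp (-a * |x|) * deriv u x ^ 2 := by
  set w : ℝ → ℝ := fun x => exp (-a * |x|)
  set G : ℝ → ℝ := fun x => w x * u x ^ 2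
  set G' : ℝ → ℝ := fun x => w x * (2 * u x * deriv u x - a * u x ^ 2)
  have hG : ∀ x ∈ Ioi (0:ℝ), HasDerivAt G (G' x) x := by
    intro x hx
    have hexp : HasDerivAt (fun y => exp (-a * y) * u y ^ 2) (G' x) x := by
      refine (((hasDerivAt_id x).const_mul (-a)).exp.mul
        ((hu x).hasDerivAt.pow 2)).congr_deriv ?_
      simp only [G', w, abs_of_pos (mem_Ioi.mp hx), id, Pi.pow_apply]
      ring
    refine hexp.congr_of_eventuallyEq ?_
    filter_upwards [Ioi_mem_nhds hx] with y hy
    simp only [G, w, abs_of_pos (mem_Ioi.mp hy)]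
  have hG'int : IntegrableOn G' (Ioi 0) := by
    have hmeas : Measurable G' := by
      have hu'meas := measurable_deriv u
      have humeas := hu.continuous.measurable
      fun_prop
    refine ((hint.const_mul (1 + |a|)).add hint').mono' hmeas.aestronglyMeasurable ?_
    filter_upwards with x
    have hw : 0 < w x := exp_pos _
    rw [Real.norm_eq_abs, abs_mul, abs_of_pos hw]
    have hbound : |2 * u x * deriv u x - a * u x ^ 2| ≤ (1 + |a|) * u x ^ 2 + deriv u x ^ 2 := by
      calc _ ≤ |2 * u x * deriv u x| + |a * u x ^ 2| := abs_sub _ _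
        _ ≤ (u x ^ 2 + deriv u x ^ 2) + |a| * u x ^ 2 := by
          gcongr
          · rw [abs_le]
            constructor <;>
              nlinarith [sq_nonneg (u x + deriv u x), sq_nonneg (u x - deriv u x)]
          · rw [abs_mul, abs_of_nonneg (sq_nonneg (u x))]
        _ = _ := by ring
    calc w x * |2 * u x * deriv u x - a * u x ^ 2|
        ≤ w x * ((1 + |a|) * u x ^ 2 + deriv u x ^ 2) := by gcongr
      _ = _ := by simp only [Pi.add_apply, w]; ring
  have hG'zero : ∫ x in Ioi 0, G' x = 0 := by
    have hucont := hu.continuous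
    have hftc := integral_Ioi_of_hasDerivAt_of_tendsto
      (Continuous.continuousWithinAt (by unfold G w; fun_prop)) hG hG'int
      (tendsto_zero_of_hasDerivAt_of_integrableOn_Ioi hG hG'int hint)
    simpa [G, hu0] using hftc
  have hsquare : ∀ x, w x * deriv u x ^ 2 =
      a ^ 2 / 4 * (w x * u x ^ 2) + a / 2 * G' x + w x * (deriv u x - a / 2 * u x) ^ 2 := by
    intro x; ring
  calc a ^ 2 / 4 * ∫ x in Ioi 0, w x * u x ^ 2
      = ∫ x in Ioi 0, (a ^ 2 / 4 * (w x * u x ^ 2) + a / 2 * G' x) := by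
        rw [integral_add (hint.const_mul _) (hG'int.const_mul _), integral_const_mul,
          integral_const_mul, hG'zero, mul_zero, add_zero]
    _ ≤ ∫ x in Ioi 0, w x * deriv u x ^ 2 := by
        refine integral_mono ((hint.const_mul _).add (hG'int.const_mul _)) hint' fun x => ?_
        rw [hsquare x]
        exact le_add_of_nonneg_right (mul_nonneg (exp_pos _).le (sq_nonneg _))

theorem integral_eq_integral_Ioi_add_integral_Ioi_comp_neg {f : ℝ → ℝ} (hf : Integrable f) :
    ∫ x, f x = (∫ x in Ioi 0, f x) + ∫ x in Ioi 0, f (-x) := by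
  rw [integral_comp_neg_Ioi, neg_zero, add_comm,
    intervalIntegral.integral_Iic_add_Ioi hf.integrableOn hf.integrableOn]

theorem weighted_hardy {u : ℝ → ℝ} (a : ℝ) (hu : Differentiable ℝ u) (hu0 : u 0 = 0)
    (hint : Integrable (fun x => exp (-a * |x|) * u x ^ 2))
    (hint' : Integrable (fun x => exp (-a * |x|) * deriv u x ^ 2)) :
    a ^ 2 / 4 * ∫ x, exp (-a * |x|) * u x ^ 2 ≤ ∫ x, exp (-a * |x|) * deriv u x ^ 2 := by
  have hreflect := weighted_hardy_Ioi (u := fun x => u (-x)) a (hu.comp differentiable_neg)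
    (by simpa using hu0) (by simpa using hint.comp_neg.integrableOn)
    (by simpa [deriv_comp_neg] using hint'.comp_neg.integrableOn)
  simp only [deriv_comp_neg, neg_sq] at hreflect
  rw [integral_eq_integral_Ioi_add_integral_Ioi_comp_neg hint,
    integral_eq_integral_Ioi_add_integral_Ioi_comp_neg hint']
  simp only [abs_neg]
  linarith [weighted_hardy_Ioi a hu hu0 hint.integrableOn hint'.integrableOn]

theorem Real.hasDerivAt_tanh (x : ℝ) : HasDerivAt tanh (1 - tanh x ^ 2) x := by
  have hcosh : cosh x ≠ 0 := (cosh_pos x).ne'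
  have hquot := (hasDerivAt_sinh x).div (hasDerivAt_cosh x) hcosh
  rw [show sinh / cosh = tanh from funext fun y => (tanh_eq_sinh_div_cosh y).symm] at hquot
  refine hquot.congr_deriv ?_
  rw [tanh_eq_sinh_div_cosh]
  field_simp

theorem Real.cosh_le_exp_abs (y : ℝ) : cosh y ≤ exp |y| := by
  rw [← cosh_abs, cosh_eq]
  linarith [exp_le_exp.mpr (show -|y| ≤ |y| by linarith [abs_nonneg y])]

theorem Real.exp_abs_le_two_mul_cosh (y : ℝ) : exp |y| ≤ 2 * cosh y := by
  rw [← cosh_abs, cosh_eq]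
  linarith [exp_pos (-|y|)]

noncomputable def groundState (x : ℝ) : ℝ := 1 - U x ^ 2

theorem hasDerivAt_U (x : ℝ) : HasDerivAt U (groundState x / √2) x := by
  refine ((hasDerivAt_tanh _).comp x ((hasDerivAt_id x).div_const √2)).congr_deriv ?_
  simp only [groundState, U, id]
  ring

@[fun_prop]
theorem continuous_U : Continuous U :=
  continuous_iff_continuousAt.mpr fun x => (hasDerivAt_U x).continuousAt

theorem groundState_eq (x : ℝ) : groundState x = (cosh (x / √2) ^ 2)⁻¹ := by
  have hcosh : cosh (x / √2) ≠ 0 := (cosh_pos _).ne'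
  rw [groundState, U, tanh_eq_sinh_div_cosh]
  field_simp
  linear_combination cosh_sq_sub_sinh_sq (x / √2)

theorem groundState_pos (x : ℝ) : 0 < groundState x := by
  rw [groundState_eq]; positivity

theorem U_sq_lt_one (x : ℝ) : U x ^ 2 < 1 := sub_pos.mp (groundState_pos x)

theorem groundState_le_one (x : ℝ) : groundState x ≤ 1 :=
  sub_le_self 1 (sq_nonneg (U x))

theorem abs_U_le_one (x : ℝ) : |U x| ≤ 1 := (sq_le_one_iff_abs_le_one _).mp (U_sq_lt_one x).le

theorem hasDerivAt_groundState (x : ℝ) :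
    HasDerivAt groundState (-(√2 * U x * groundState x)) x := by
  refine ((hasDerivAt_U x).pow 2).const_sub 1 |>.congr_deriv ?_
  have h2 : √2 ^ 2 = 2 := sq_sqrt zero_le_two
  field_simp
  linear_combination U x * groundState x * h2

@[fun_prop]
theorem continuous_groundState : Continuous groundState :=
  continuous_const.sub (continuous_U.pow 2)

theorem groundState_sq_eq (x : ℝ) :
    groundState x ^ 2 = (cosh (x / √2) ^ 4)⁻¹ := by
  rw [groundState_eq]; ring

theorem exp_abs_div_sqrt_two_pow_four (x : ℝ) : exp |x / √2| ^ 4 = exp (2 * √2 * |x|) := by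
  have h2 : √2 ^ 2 = 2 := sq_sqrt zero_le_two
  rw [← exp_nat_mul, abs_div, abs_of_pos (by positivity : (0:ℝ) < √2)]
  congr 1
  field_simp
  linear_combination -2 * |x| * h2

theorem exp_neg_mul_abs_le_groundState_sq (x : ℝ) :
    exp (-(2 * √2) * |x|) ≤ groundState x ^ 2 := by
  rw [groundState_sq_eq, neg_mul, exp_neg, ← exp_abs_div_sqrt_two_pow_four]
  have hcosh_le := cosh_le_exp_abs (x / √2)
  have hcosh_pos := cosh_pos (x / √2)
  gcongr

theorem groundState_sq_le_exp_neg_mul_abs (x : ℝ) :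
    groundState x ^ 2 ≤ 16 * exp (-(2 * √2) * |x|) := by
  rw [groundState_sq_eq, neg_mul, exp_neg, ← exp_abs_div_sqrt_two_pow_four,
    show (16 : ℝ) * (exp |x / √2| ^ 4)⁻¹ = ((exp |x / √2| / 2) ^ 4)⁻¹ by
      field_simp; norm_num]
  have hexp_le := exp_abs_le_two_mul_cosh (x / √2)
  have hexp_pos := exp_pos |x / √2|
  gcongr
  linarith

theorem exp_neg_mul_abs_mul_sq_le (x t : ℝ) :
    exp (-(2 * √2) * |x|) * t ^ 2 ≤ (groundState x * t) ^ 2 := by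
  rw [mul_pow]
  gcongr
  exact exp_neg_mul_abs_le_groundState_sq x

theorem groundState_mul_sq_le (x t : ℝ) :
    (groundState x * t) ^ 2 ≤ 16 * (exp (-(2 * √2) * |x|) * t ^ 2) := by
  rw [mul_pow, ← mul_assoc]
  gcongr
  exact groundState_sq_le_exp_neg_mul_abs x

theorem integral_groundState_mul_sq_le {u : ℝ → ℝ} (hu : Differentiable ℝ u) (hu0 : u 0 = 0)
    (hint : Integrable fun x => (groundState x * u x) ^ 2)
    (hint' : Integrable fun x => (groundState x * deriv u x) ^ 2) :
    ∫ x, (groundState x * u x) ^ 2 ≤ 8 * ∫ x, (groundState x * deriv u x) ^ 2 := by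
  have hmeas : Measurable u := hu.continuous.measurable
  have hmeas' : Measurable (deriv u) := measurable_deriv u
  have hwu : Integrable fun x => exp (-(2 * √2) * |x|) * u x ^ 2 :=
    hint.mono' (by fun_prop) (Eventually.of_forall fun x => by
      rw [Real.norm_eq_abs, abs_of_nonneg (by positivity)]
      exact exp_neg_mul_abs_mul_sq_le x (u x))
  have hwu' : Integrable fun x => exp (-(2 * √2) * |x|) * deriv u x ^ 2 :=
    hint'.mono' (by fun_prop) (Eventually.of_forall fun x => by
      rw [Real.norm_eq_abs, abs_of_nonneg (by positivity)]
      exact exp_neg_mul_abs_mul_sq_le x (deriv u x))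
  have hhardy := weighted_hardy (2 * √2) hu hu0 hwu hwu'
  have hconst : (2 * √2) ^ 2 / 4 = 2 := by rw [mul_pow, sq_sqrt zero_le_two]; norm_num
  rw [hconst] at hhardy
  calc ∫ x, (groundState x * u x) ^ 2
      ≤ ∫ x, 16 * (exp (-(2 * √2) * |x|) * u x ^ 2) :=
        integral_mono hint (hwu.const_mul 16) fun x => groundState_mul_sq_le x (u x)
    _ ≤ 8 * ∫ x, exp (-(2 * √2) * |x|) * deriv u x ^ 2 := by
        rw [integral_const_mul]; linarith
    _ ≤ 8 * ∫ x, (groundState x * deriv u x) ^ 2 := by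
        gcongr
        exact fun x => exp_neg_mul_abs_mul_sq_le x (deriv u x)

theorem memLp_groundState : MemLp groundState 2 := by
  refine (memLp_two_iff_integrable_sq continuous_groundState.aestronglyMeasurable).mpr ?_
  refine ((integrable_exp_neg_mul_abs (a := 2 * √2) (by positivity)).const_mul 16).mono'
    (continuous_groundState.pow 2).aestronglyMeasurable (Eventually.of_forall fun x => ?_)
  rw [Real.norm_eq_abs, abs_of_nonneg (sq_nonneg _)]
  exact groundState_sq_le_exp_neg_mul_abs x

noncomputable def groundStateDeriv (v : ℝ → ℝ) (x : ℝ) : ℝ := deriv v x + √2 * U x * v x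

theorem hasDerivAt_div_groundState {v : ℝ → ℝ} {x : ℝ} (hv : DifferentiableAt ℝ v x) :
    HasDerivAt (fun y => v y / groundState y) (groundStateDeriv v x / groundState x) x := by
  have hφ := (groundState_pos x).ne'
  refine (hv.hasDerivAt.div (hasDerivAt_groundState x) hφ).congr_deriv ?_
  rw [groundStateDeriv]
  field_simp
  ring

theorem memLp_groundStateDeriv {v : ℝ → ℝ} (hv : ContDiff ℝ 1 v) (hv2 : MemLp v 2)
    (hv'2 : MemLp (deriv v) 2) : MemLp (groundStateDeriv v) 2 := by
  refine hv'2.add (hv2.of_le_mul (c := √2)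
    (by have := hv.continuous; fun_prop) (Eventually.of_forall fun x => ?_))
  rw [Real.norm_eq_abs, Real.norm_eq_abs, abs_mul, abs_mul,
    abs_of_pos (by positivity : (0:ℝ) < √2)]
  calc √2 * |U x| * |v x| ≤ √2 * 1 * |v x| := by gcongr; exact abs_U_le_one x
    _ = √2 * |v x| := by ring

theorem integral_quadForm_eq_neg_integral_groundStateDeriv_sq {v : ℝ → ℝ}
    (hv : ContDiff ℝ 1 v) (hv2 : MemLp v 2) (hv'2 : MemLp (deriv v) 2) :
    ∫ x, (-(deriv v x) ^ 2 - (3 * U x ^ 2 - 1) * v x ^ 2) = -∫ x, groundStateDeriv v x ^ 2 := by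
  have hvc := hv.continuous
  have hv'c := hv.continuous_deriv le_rfl
  set F : ℝ → ℝ := fun x => U x * v x ^ 2
  set F' : ℝ → ℝ := fun x => groundState x / √2 * v x ^ 2 + 2 * U x * (v x * deriv v x)
  have hF : ∀ x, HasDerivAt F (F' x) x := fun x => by
    refine ((hasDerivAt_U x).mul
      ((hv.differentiable one_ne_zero x).hasDerivAt.pow 2)).congr_deriv ?_
    simp only [F', Pi.pow_apply]
    ring
  have hbound : ∀ x, ‖groundState x / √2‖ ≤ 1 := fun x => by
    rw [Real.norm_eq_abs, abs_of_pos (by have := groundState_pos x; positivity),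
      div_le_one (by positivity)]
    linarith [groundState_le_one x, one_le_sqrt.mpr one_le_two]
  have hFint : Integrable F :=
    hv2.integrable_sq.bdd_mul (by fun_prop) (Eventually.of_forall fun x => abs_U_le_one x)
  have hF'int : Integrable F' :=
    (hv2.integrable_sq.bdd_mul (by fun_prop) (Eventually.of_forall hbound)).add
      ((hv2.integrable_mul hv'2).bdd_mul (c := 2) (by fun_prop)
        (Eventually.of_forall fun x => by
          rw [norm_mul, Real.norm_two]; linarith [abs_U_le_one x, Real.norm_eq_abs (U x)]))
  have hpointwise : ∀ x, -(deriv v x) ^ 2 - (3 * U x ^ 2 - 1) * v x ^ 2 =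
      √2 * F' x - groundStateDeriv v x ^ 2 := fun x => by
    have h2 : √2 ^ 2 = 2 := sq_sqrt zero_le_two
    simp only [F', groundStateDeriv, groundState]
    field_simp
    linear_combination U x ^ 2 * v x ^ 2 * h2
  simp_rw [hpointwise]
  rw [integral_sub (hF'int.const_mul _) (memLp_groundStateDeriv hv hv2 hv'2).integrable_sq,
    integral_const_mul, integral_eq_zero_of_hasDerivAt_of_integrable hF hF'int hFint]
  ring

theorem integral_sq_le_eight_mul_integral_groundStateDeriv_sq {v : ℝ → ℝ}
    (hv : ContDiff ℝ 1 v) (hv2 : MemLp v 2) (hv'2 : MemLp (deriv v) 2)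
    (horth : ∫ x, v x * groundState x = 0) :
    ∫ x, v x ^ 2 ≤ 8 * ∫ x, groundStateDeriv v x ^ 2 := by
  set c := v 0 / groundState 0
  set u : ℝ → ℝ := fun x => v x / groundState x - c
  have hu : ∀ x, HasDerivAt u (groundStateDeriv v x / groundState x) x := fun x =>
    (hasDerivAt_div_groundState (hv.differentiable one_ne_zero x)).sub_const c
  have hφu : ∀ x, groundState x * u x = v x - c * groundState x := fun x => by
    have hφ := (groundState_pos x).ne'
    simp only [u]; field_simp
  have hφu' : ∀ x, groundState x * deriv u x = groundStateDeriv v x := fun x => by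
    have hφ := (groundState_pos x).ne'
    rw [(hu x).deriv]; field_simp
  have hsub : MemLp (fun x => v x - c * groundState x) 2 :=
    hv2.sub (memLp_groundState.const_mul c)
  calc ∫ x, v x ^ 2
      ≤ ∫ x, (v x - c * groundState x) ^ 2 :=
        integral_sq_le_integral_sub_mul_sq c hv2 memLp_groundState horth
    _ = ∫ x, (groundState x * u x) ^ 2 := by simp_rw [hφu]
    _ ≤ 8 * ∫ x, (groundState x * deriv u x) ^ 2 := by
        refine integral_groundState_mul_sq_le (fun x => (hu x).differentiableAt)
          (sub_self c) ?_ ?_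
        · simpa only [hφu] using hsub.integrable_sq
        · simpa only [hφu'] using (memLp_groundStateDeriv hv hv2 hv'2).integrable_sq
    _ = 8 * ∫ x, groundStateDeriv v x ^ 2 := by simp_rw [hφu']

theorem spectral_gap_orthogonality_condition :
    ∃ lam₀ > (0:ℝ), ∀ v : ℝ → ℝ,
      ContDiff ℝ 1 v →
      Integrable (fun x => (v x) ^ 2) →
      Integrable (fun x => (deriv v x) ^ 2) →
      (∫ s : ℝ, v s * deriv U s) = 0 →
      (∫ s : ℝ, (-(deriv v s) ^ 2 - (3 * (U s) ^ 2 - 1) * (v s) ^ 2)) ≤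
        -lam₀ * ∫ s : ℝ, (v s) ^ 2 := by
  refine ⟨1 / 8, by norm_num, fun v hv hv2 hv'2 horth => ?_⟩
  have hvL2 : MemLp v 2 :=
    (memLp_two_iff_integrable_sq hv.continuous.aestronglyMeasurable).mpr hv2
  have hv'L2 : MemLp (deriv v) 2 :=
    (memLp_two_iff_integrable_sq (hv.continuous_deriv le_rfl).aestronglyMeasurable).mpr hv'2
  have horth' : ∫ x, v x * groundState x = 0 := by
    simp_rw [fun s => (hasDerivAt_U s).deriv, ← mul_div_assoc, integral_div] at horth
    exact (div_eq_zero_iff.mp horth).resolve_right (by positivity)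
  rw [integral_quadForm_eq_neg_integral_groundStateDeriv_sq hv hvL2 hv'L2]
  linarith [integral_sq_le_eight_mul_integral_groundStateDeriv_sq hv hvL2 hv'L2 horth']
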